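/- Let φ : ℝ^N → ℝ be continuously differentiable and let y : [0,∞) → ℝ^N be a differentiable solution of the gradient flow ẏ(t) = −∇φ(y(t)) whose trajectory is bounded, and let y_∞ be an accumulation point of the trajectory at which the Lojasiewicz gradient inequality holds (there exist γ ∈ [1/2, 1), C_L > 0 and r > 0 such that |φ(z) − φ(y_∞)|^γ ≤ C_L ‖∇φ(z)‖ whenever ‖z − y_∞‖ < r). Then the trajectory has finite length, ∫_0^∞ ‖ẏ(s)‖ ds < ∞, and converges: y(t) → y_∞ as t → ∞. -/

import Mathlib

open Filter Set MeasureTheory Topology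

/-!
Along the flow the energy `F t = φ (y t) - φ y_∞` satisfies `F' = -‖∇φ (y t)‖²`, so it decreases,
and since `y_∞` is a cluster point of the trajectory it tends to `0` from above. Wherever the
Łojasiewicz inequality holds, the desingularized energy `ψ = C_L / (1 - γ) · F ^ (1 - γ)` decreases
at least as fast as `y` moves, `ψ' ≤ -‖ẏ‖`, so the length of `y` on `[a, b]` is at most
`ψ a - ψ b`. Starting at a time where `y` is close to `y_∞` and `ψ` is small, this bound keeps the
trajectory inside the Łojasiewicz ball forever (first exit time argument). Hence the length is
finite and `‖y t - y_∞‖ ≤ ψ t → 0`.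
-/

theorem AntitoneOn.le_of_mapClusterPt {α β : Type*} [Preorder α] [LinearOrder β]
    [TopologicalSpace β] [OrderClosedTopology β] {f : α → β} {a : α} {l : β}
    (hf : AntitoneOn f (Ici a)) (hl : MapClusterPt l atTop f) {t : α} (ht : a ≤ t) :
    l ≤ f t := by
  by_contra! hlt
  obtain ⟨s, hs, hts⟩ :=
    ((hl.frequently (Ioi_mem_nhds hlt)).and_eventually (eventually_ge_atTop t)).exists
  exact (hf ht (ht.trans hts) hts).not_gt hs

theorem AntitoneOn.tendsto_atTop_of_mapClusterPt {α β : Type*} [Preorder α] [LinearOrder β]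
    [TopologicalSpace β] [OrderTopology β] {f : α → β} {a : α} {l : β}
    (hf : AntitoneOn f (Ici a)) (hl : MapClusterPt l atTop f) : Tendsto f atTop (𝓝 l) := by
  refine tendsto_order.2 ⟨fun l' hl' => ?_, fun l' hl' => ?_⟩
  · filter_upwards [eventually_ge_atTop a] with t ht using
      hl'.trans_le (hf.le_of_mapClusterPt hl ht)
  · obtain ⟨s, hs, has⟩ :=
      ((hl.frequently (Iio_mem_nhds hl')).and_eventually (eventually_ge_atTop a)).exists
    filter_upwards [eventually_ge_atTop s] with t hst using
      (hf has (has.trans hst) hst).trans_lt hs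

theorem ContinuousOn.lt_of_forall_Ico_lt_imp_le {α β : Type*}
    [ConditionallyCompleteLinearOrder α] [TopologicalSpace α] [OrderTopology α] [LinearOrder β]
    [TopologicalSpace β] [OrderClosedTopology β] {f : α → β} {T : α} {r ρ : β} (hf : ContinuousOn f (Ici T))
    (hρ : ρ < r) (h : ∀ t, T ≤ t → (∀ s ∈ Ico T t, f s < r) → f t ≤ ρ) {t : α} (ht : T ≤ t) :
    f t < r := by
  by_contra! hexit
  set A := Ici T ∩ f ⁻¹' Ici r
  have hbdd : BddBelow A := ⟨T, fun s hs => hs.1⟩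
  -- the first exit time from `{f < r}`
  have hmem : sInf A ∈ A :=
    (hf.preimage_isClosed_of_isClosed isClosed_Ici isClosed_Ici).csInf_mem ⟨t, ht, hexit⟩ hbdd
  have hbefore : ∀ s ∈ Ico T (sInf A), f s < r := fun s hs =>
    not_le.1 fun hrs => hs.2.not_ge (csInf_le hbdd ⟨hs.1, hrs⟩)
  exact ((h _ hmem.1 hbefore).trans_lt hρ).not_ge hmem.2

theorem norm_sub_le_integral_norm_deriv {E : Type*} [NormedAddCommGroup E] [NormedSpace ℝ E]
    [CompleteSpace E] {f f' : ℝ → E} {a b : ℝ} (hab : a ≤ b)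
    (hf : ∀ x ∈ Icc a b, HasDerivAt f (f' x) x) (hf' : ContinuousOn f' (Icc a b)) :
    ‖f b - f a‖ ≤ ∫ x in a..b, ‖f' x‖ := by
  rw [← uIcc_of_le hab] at hf hf'
  rw [← intervalIntegral.integral_eq_sub_of_hasDerivAt hf hf'.intervalIntegrable]
  exact intervalIntegral.norm_integral_le_integral_norm hab

theorem integral_le_sub_of_hasDeriv_right_of_le_neg {g ψ : ℝ → ℝ} {a b : ℝ} (hab : a ≤ b)
    (hg : IntegrableOn g (Icc a b)) (hψ : ContinuousOn ψ (Icc a b))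
    (h : ∀ x ∈ Ioo a b, ∃ d, HasDerivWithinAt ψ d (Ici x) x ∧ g x ≤ -d) :
    ∫ x in a..b, g x ≤ ψ a - ψ b := by
  choose! d hd hgd using h
  have := intervalIntegral.integral_le_sub_of_hasDeriv_right_of_le hab hψ.neg
    (fun x hx => ((hd x hx).mono Ioi_subset_Ici_self).neg) hg hgd
  simp only [Pi.neg_apply] at this
  linarith

section SpeedControl

variable {E : Type*} [NormedAddCommGroup E] [NormedSpace ℝ E] [CompleteSpace E]
  {y y' : ℝ → E} {ψ : ℝ → ℝ} {x : E}

theorem norm_sub_le_sub_of_hasDeriv_right_of_norm_le_neg {a b : ℝ} (hab : a ≤ b)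
    (hy : ∀ t ∈ Icc a b, HasDerivAt y (y' t) t) (hy' : ContinuousOn y' (Icc a b))
    (hψ : ContinuousOn ψ (Icc a b))
    (hspeed : ∀ t ∈ Ioo a b, ∃ d, HasDerivWithinAt ψ d (Ici t) t ∧ ‖y' t‖ ≤ -d) :
    ‖y b - y a‖ ≤ ψ a - ψ b :=
  (norm_sub_le_integral_norm_deriv hab hy hy').trans
    (integral_le_sub_of_hasDeriv_right_of_le_neg hab hy'.norm.integrableOn_Icc hψ hspeed)

theorem integrableOn_Ioi_norm_deriv_and_tendsto_of_hasDeriv_right {T : ℝ}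
    (hy : ∀ t, T ≤ t → HasDerivAt y (y' t) t) (hy' : ContinuousOn y' (Ici T))
    (hψ : ContinuousOn ψ (Ici T)) (hψ0 : ∀ t, T ≤ t → 0 ≤ ψ t) (hψlim : Tendsto ψ atTop (𝓝 0))
    (hx : MapClusterPt x atTop y)
    (hspeed : ∀ t, T ≤ t → ∃ d, HasDerivWithinAt ψ d (Ici t) t ∧ ‖y' t‖ ≤ -d) :
    IntegrableOn (fun t => ‖y' t‖) (Ioi T) ∧ Tendsto y atTop (𝓝 x) := by
  have hsub {a b : ℝ} (ha : T ≤ a) : Icc a b ⊆ Ici T := fun s hs => ha.trans hs.1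
  have hlen {a b : ℝ} (ha : T ≤ a) (hab : a ≤ b) : ∫ t in a..b, ‖y' t‖ ≤ ψ a - ψ b :=
    integral_le_sub_of_hasDeriv_right_of_le_neg hab (hy'.mono (hsub ha)).norm.integrableOn_Icc
      (hψ.mono (hsub ha)) fun t ht => hspeed t (ha.trans ht.1.le)
  have hdisp {a b : ℝ} (ha : T ≤ a) (hab : a ≤ b) : ‖y b - y a‖ ≤ ψ a - ψ b :=
    norm_sub_le_sub_of_hasDeriv_right_of_norm_le_neg hab (fun t ht => hy t (ha.trans ht.1))
      (hy'.mono (hsub ha)) (hψ.mono (hsub ha)) fun t ht => hspeed t (ha.trans ht.1.le)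
  constructor
  · refine integrableOn_Ioi_of_intervalIntegral_norm_bounded (ψ T) T (l := atTop) (b := id)
      (fun b => (hy'.mono (hsub le_rfl)).norm.integrableOn_Icc.mono_set Ioc_subset_Icc_self)
      tendsto_id ?_
    filter_upwards [eventually_ge_atTop T] with b hb
    simp only [id, norm_norm]
    linarith [hlen le_rfl hb, hψ0 b hb]
  · have hrate (t : ℝ) (ht : T ≤ t) : ‖y t - x‖ ≤ ψ t := by
      refine le_of_forall_pos_lt_add fun ε hε => ?_
      obtain ⟨s, hs, hts⟩ := ((hx.frequently (Metric.ball_mem_nhds x hε)).and_eventually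
        (eventually_ge_atTop t)).exists
      rw [dist_eq_norm] at hs
      linarith [norm_sub_le_norm_sub_add_norm_sub (y t) (y s) x, norm_sub_rev (y t) (y s),
        hdisp ht hts, hψ0 s (ht.trans hts)]
    rw [tendsto_iff_norm_sub_tendsto_zero]
    refine squeeze_zero' (Eventually.of_forall fun t => norm_nonneg _) ?_ hψlim
    filter_upwards [eventually_ge_atTop T] with t ht using hrate t ht

theorem exists_forall_ge_norm_sub_lt_of_hasDeriv_right {t₀ r : ℝ}
    (hy : ∀ t, t₀ ≤ t → HasDerivAt y (y' t) t) (hy' : ContinuousOn y' (Ici t₀))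
    (hψ : ContinuousOn ψ (Ici t₀)) (hψ0 : ∀ t, t₀ ≤ t → 0 ≤ ψ t) (hψlim : Tendsto ψ atTop (𝓝 0))
    (hx : MapClusterPt x atTop y) (hr : 0 < r)
    (hspeed : ∀ t, t₀ ≤ t → ‖y t - x‖ < r → ∃ d, HasDerivWithinAt ψ d (Ici t) t ∧ ‖y' t‖ ≤ -d) :
    ∃ T, t₀ ≤ T ∧ ∀ t, T ≤ t → ‖y t - x‖ < r := by
  obtain ⟨T, hyT, hT, hψT⟩ := ((hx.frequently (Metric.ball_mem_nhds x (half_pos hr))).and_eventually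
    ((eventually_ge_atTop t₀).and (hψlim.eventually (gt_mem_nhds (half_pos hr))))).exists
  rw [dist_eq_norm] at hyT
  refine ⟨T, hT, fun t ht => ContinuousOn.lt_of_forall_Ico_lt_imp_le
    (f := fun s => ‖y s - x‖) (ρ := ‖y T - x‖ + ψ T) ?_
    (by linarith) (fun t hTt hball => ?_) ht⟩
  · exact (ContinuousOn.sub (fun s hs => (hy s (hT.trans hs)).continuousAt.continuousWithinAt)
      continuousOn_const).norm
  · have hsub : Icc T t ⊆ Ici t₀ := fun s hs => hT.trans hs.1
    have := norm_sub_le_sub_of_hasDeriv_right_of_norm_le_neg hTt (fun s hs => hy s (hsub hs))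
      (hy'.mono hsub) (hψ.mono hsub)
      fun s hs => hspeed s (hsub (Ioo_subset_Icc_self hs)) (hball s (Ioo_subset_Ico_self hs))
    linarith [norm_sub_le_norm_sub_add_norm_sub (y t) (y T) x, hψ0 t (hT.trans hTt)]

theorem integrableOn_norm_deriv_and_tendsto_of_hasDeriv_right {t₀ r : ℝ}
    (hy : ∀ t, t₀ ≤ t → HasDerivAt y (y' t) t) (hy' : ContinuousOn y' (Ici t₀))
    (hψ : ContinuousOn ψ (Ici t₀)) (hψ0 : ∀ t, t₀ ≤ t → 0 ≤ ψ t) (hψlim : Tendsto ψ atTop (𝓝 0))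
    (hx : MapClusterPt x atTop y) (hr : 0 < r)
    (hspeed : ∀ t, t₀ ≤ t → ‖y t - x‖ < r → ∃ d, HasDerivWithinAt ψ d (Ici t) t ∧ ‖y' t‖ ≤ -d) :
    IntegrableOn (fun t => ‖y' t‖) (Ici t₀) ∧ Tendsto y atTop (𝓝 x) := by
  obtain ⟨T, hT, hball⟩ :=
    exists_forall_ge_norm_sub_lt_of_hasDeriv_right hy hy' hψ hψ0 hψlim hx hr hspeed
  have hsub : Ici T ⊆ Ici t₀ := Ici_subset_Ici.2 hT
  obtain ⟨hint, hlim⟩ := integrableOn_Ioi_norm_deriv_and_tendsto_of_hasDeriv_right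
    (fun t ht => hy t (hsub ht)) (hy'.mono hsub) (hψ.mono hsub) (fun t ht => hψ0 t (hsub ht))
    hψlim hx fun t ht => hspeed t (hsub ht) (hball t ht)
  refine ⟨?_, hlim⟩
  rw [← Icc_union_Ioi_eq_Ici hT]
  exact ((hy'.mono Icc_subset_Ici_self).norm.integrableOn_Icc).union hint

end SpeedControl

-- Only a right derivative: `F ^ (1 - γ)` need not be differentiable where `F` first vanishes.
theorem exists_hasDeriv_right_rpow_of_lojasiewicz {F : ℝ → ℝ} {w γ C t : ℝ}
    (hF : HasDerivAt F (-w ^ 2) t) (hanti : AntitoneOn F (Ici t))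
    (hnonneg : ∀ s, t ≤ s → 0 ≤ F s) (hγ : γ ≠ 1) (hw : 0 ≤ w) (hL : F t ^ γ ≤ C * w) :
    ∃ d, HasDerivWithinAt (fun s => C / (1 - γ) * F s ^ (1 - γ)) d (Ici t) t ∧ w ≤ -d := by
  rcases (hnonneg t le_rfl).lt_or_eq with hpos | hzero
  · refine ⟨_, ((hF.rpow_const (Or.inl hpos.ne')).const_mul _).hasDerivWithinAt, ?_⟩
    have hFγ : 0 < F t ^ γ := Real.rpow_pos_of_pos hpos γ
    have hd : -(C / (1 - γ) * (-w ^ 2 * (1 - γ) * F t ^ (1 - γ - 1))) = C * w * w / F t ^ γ := by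
      rw [sub_sub_cancel_left, Real.rpow_neg hpos.le]
      field_simp [sub_ne_zero.2 hγ.symm]
    rw [hd, le_div_iff₀ hFγ]
    calc w * F t ^ γ ≤ w * (C * w) := mul_le_mul_of_nonneg_left hL hw
      _ = C * w * w := by ring
  · -- `F` vanishes on `[t, ∞)`, so its right derivative `-w ^ 2` at `t` is zero
    have hvanish : ∀ s ∈ Ici t, F s = 0 := fun s hs =>
      le_antisymm (hzero ▸ hanti self_mem_Ici hs hs) (hnonneg s hs)
    have hw0 : w = 0 := by
      have := (uniqueDiffWithinAt_Ici t).eq_deriv _ hF.hasDerivWithinAt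
        ((hasDerivWithinAt_const t (Ici t) 0).congr hvanish (hvanish t self_mem_Ici))
      simpa using this
    refine ⟨0, (hasDerivWithinAt_const t (Ici t) (C / (1 - γ) * 0 ^ (1 - γ))).congr
      (fun s hs => by rw [hvanish s hs]) (by rw [hvanish t self_mem_Ici]), by simp [hw0]⟩

section GradientFlow

variable {E : Type*} [NormedAddCommGroup E] [InnerProductSpace ℝ E] [CompleteSpace E]
  {φ : E → ℝ} {y : ℝ → E}

theorem ContDiff.continuous_gradient (hφ : ContDiff ℝ 1 φ) : Continuous (gradient φ) :=
  (InnerProductSpace.toDual ℝ E).symm.continuous.comp (hφ.continuous_fderiv one_ne_zero)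

theorem hasDerivAt_energy_of_gradient_flow {t : ℝ} (hφ : DifferentiableAt ℝ φ (y t))
    (hy : HasDerivAt y (-gradient φ (y t)) t) :
    HasDerivAt (fun s => φ (y s)) (-‖gradient φ (y t)‖ ^ 2) t := by
  have := hφ.hasGradientAt.hasFDerivAt.comp_hasDerivAt t hy
  rwa [InnerProductSpace.toDual_apply_apply, inner_neg_right, real_inner_self_eq_norm_sq] at this

theorem antitoneOn_energy_of_gradient_flow {t₀ : ℝ} (hφ : Differentiable ℝ φ)
    (hy : ∀ t, t₀ ≤ t → HasDerivAt y (-gradient φ (y t)) t) :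
    AntitoneOn (fun t => φ (y t)) (Ici t₀) := by
  have hE (t : ℝ) (ht : t₀ ≤ t) := hasDerivAt_energy_of_gradient_flow (hφ (y t)) (hy t ht)
  refine antitoneOn_of_hasDerivWithinAt_nonpos (convex_Ici t₀)
    (fun t ht => (hE t ht).continuousAt.continuousWithinAt)
    (fun t ht => (hE t (interior_subset ht)).hasDerivWithinAt) fun t _ => ?_
  exact neg_nonpos.2 (sq_nonneg _)

end GradientFlow

theorem gradient_flow_finite_length_and_convergence_general {Nn : ℕ}
    (φ : EuclideanSpace ℝ (Fin Nn) → ℝ) (hφ : ContDiff ℝ 1 φ)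
    (y y' : ℝ → EuclideanSpace ℝ (Fin Nn))
    (hy : ∀ t, 0 ≤ t → HasDerivAt y (y' t) t)
    (hgf : ∀ t, 0 ≤ t → y' t = -gradient φ (y t))
    (y_inf : EuclideanSpace ℝ (Fin Nn))
    (hacc : ∃ tn : ℕ → ℝ, (∀ k, 0 ≤ tn k) ∧ Tendsto tn atTop atTop ∧
      Tendsto (fun k => y (tn k)) atTop (nhds y_inf))
    (γ C_L r : ℝ) (hγ : γ ∈ Set.Ico (1/2 : ℝ) 1) (hCL : 0 < C_L) (hr : 0 < r)
    (hLoj : ∀ z, ‖z - y_inf‖ < r → |φ z - φ y_inf| ^ γ ≤ C_L * ‖gradient φ z‖) :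
    MeasureTheory.IntegrableOn (fun s => ‖y' s‖) (Set.Ici (0 : ℝ)) ∧
      Tendsto y atTop (nhds y_inf) := by
  obtain ⟨tn, -, htn, hytn⟩ := hacc
  have h1γ : 0 < 1 - γ := sub_pos.2 hγ.2
  have hx : MapClusterPt y_inf atTop y := hytn.mapClusterPt.of_comp htn
  have hflow (t : ℝ) (ht : 0 ≤ t) : HasDerivAt y (-gradient φ (y t)) t := hgf t ht ▸ hy t ht
  set F : ℝ → ℝ := fun t => φ (y t) - φ y_inf
  have hF (t : ℝ) (ht : 0 ≤ t) : HasDerivAt F (-‖gradient φ (y t)‖ ^ 2) t :=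
    (hasDerivAt_energy_of_gradient_flow (hφ.differentiable one_ne_zero _) (hflow t ht)).sub_const _
  have hFanti : AntitoneOn F (Ici 0) := fun a ha b hb hab => sub_le_sub_right
    (antitoneOn_energy_of_gradient_flow (hφ.differentiable one_ne_zero) hflow ha hb hab) _
  have hFx : MapClusterPt 0 atTop F := by
    have := MapClusterPt.continuousAt_comp (f := fun z => φ z - φ y_inf)
      (hφ.continuous.sub continuous_const).continuousAt hx
    rwa [sub_self] at this
  have hF0 (t : ℝ) (ht : 0 ≤ t) : 0 ≤ F t := hFanti.le_of_mapClusterPt hFx ht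
  have hFc : ContinuousOn F (Ici 0) := fun t ht => (hF t ht).continuousAt.continuousWithinAt
  refine integrableOn_norm_deriv_and_tendsto_of_hasDeriv_right
    (ψ := fun t => C_L / (1 - γ) * F t ^ (1 - γ)) hy ?_
    (continuousOn_const.mul (hFc.rpow_const fun _ _ => Or.inr h1γ.le))
    (fun t ht => mul_nonneg (div_nonneg hCL.le h1γ.le) (Real.rpow_nonneg (hF0 t ht) _)) ?_ hx hr
    fun t ht hball => ?_
  · exact (hφ.continuous_gradient.comp_continuousOn fun t ht =>
      (hy t ht).continuousAt.continuousWithinAt).neg.congr hgf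
  · simpa [Real.zero_rpow h1γ.ne'] using
      ((hFanti.tendsto_atTop_of_mapClusterPt hFx).rpow_const (Or.inr h1γ.le)).const_mul _
  · rw [hgf t ht, norm_neg]
    refine exists_hasDeriv_right_rpow_of_lojasiewicz (hF t ht) (hFanti.mono (Ici_subset_Ici.2 ht))
      (fun s hs => hF0 s (ht.trans hs)) hγ.2.ne (norm_nonneg _) ?_
    simpa [F, abs_of_nonneg (hF0 t ht)] using hLoj _ hball

/-- a bounded gradient-flow trajectory `ẏ = −∇φ(y)` with an accumulation
point `y_∞` at which the Lojasiewicz gradient inequality holds has finite length,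
`∫_0^∞ ‖ẏ(s)‖ ds < ∞`, and converges: `y(t) → y_∞` as `t → ∞`. -/
theorem gradient_flow_finite_length_and_convergence {Nn : ℕ}
    (φ : EuclideanSpace ℝ (Fin Nn) → ℝ) (hφ : ContDiff ℝ 1 φ)
    (y y' : ℝ → EuclideanSpace ℝ (Fin Nn))
    (hy : ∀ t, 0 ≤ t → HasDerivAt y (y' t) t)
    (hgf : ∀ t, 0 ≤ t → y' t = -gradient φ (y t))
    (hbd : ∃ M : ℝ, ∀ t, 0 ≤ t → ‖y t‖ ≤ M)
    (y_inf : EuclideanSpace ℝ (Fin Nn))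
    (hacc : ∃ tn : ℕ → ℝ, (∀ k, 0 ≤ tn k) ∧ Tendsto tn atTop atTop ∧
      Tendsto (fun k => y (tn k)) atTop (nhds y_inf))
    (γ C_L r : ℝ) (hγ : γ ∈ Set.Ico (1/2 : ℝ) 1) (hCL : 0 < C_L) (hr : 0 < r)
    (hLoj : ∀ z, ‖z - y_inf‖ < r → |φ z - φ y_inf| ^ γ ≤ C_L * ‖gradient φ z‖) :
    MeasureTheory.IntegrableOn (fun s => ‖y' s‖) (Set.Ici (0 : ℝ)) ∧
      Tendsto y atTop (nhds y_inf) :=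
  gradient_flow_finite_length_and_convergence_general φ hφ y y' hy hgf y_inf hacc γ C_L r hγ hCL hr
    hLoj
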